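/- Let (G,·) be a group with identity e and let ⊙ be an associative binary operation on G making (G,·,e,⊙) an identical group-e-semigroup, i.e. e⊙(x·y) = e⊙(x⊙y) = x⊙y = (x·y)⊙e = (x⊙y)⊙e for all x,y ∈ G. Then: (i) (G,·,⊙) is a group-joined-semigroup: t⊙(x·y) = t⊙(x⊙y) and (x·y)⊙t = (x⊙y)⊙t for all t,x,y ∈ G (hence, by associativity of ⊙, t⊙(x·y) = (t⊙x)⊙y and (x·y)⊙t = x⊙(y⊙t)); (ii) e⊙e is central in (G,⊙): (e⊙e)⊙x = x⊙(e⊙e) for all x; (iii) e⊙e is the unique idempotent of (G,⊙): δ⊙δ = δ implies δ = e⊙e; (iv) for every x ∈ G there exists y ∈ G with x⊙y = y⊙x = e⊙e; (v) (G,⊙,e⊙e) is class united: (e⊙e)⊙(x⊙y) = x⊙y for all x,y. Hence (G,⊙) is a unipotent class united grouplike. -/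

import Mathlib

/-!
Writing `φ z := z ⊙ e`, the law `x ⊙ y = (x·y) ⊙ e` says `x ⊙ y = φ (x·y)`, and `e ⊙ (x ⊙ y) = x ⊙ y`
makes `φ` idempotent. Associativity of `⊙` then reads `φ (φ (a·b)·c) = φ (a·φ (b·c))`, so `φ` absorbs
itself inside products: `φ (t·z) = φ (t·φ z)` and `φ (x·t) = φ (φ x·t)`. Every claim is now a computation
in the group: for instance `ε := e ⊙ e = φ e` acts as `φ`, inverses are group inverses, and an idempotent
`δ = φ (δ·δ)` satisfies `δ = φ δ = φ (φ (δ·δ)·δ⁻¹) = φ e = ε`.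
-/

section IdenticalGroupESemigroup

variable {G : Type*} [Group G] {op : G → G → G}

theorem op_one_op_one (hunit : ∀ x y : G, op 1 (op x y) = op x y)
    (hmul : ∀ x y : G, op x y = op (x * y) 1) (z : G) : op (op z 1) 1 = op z 1 := by
  simpa [hmul 1 (op z 1)] using hunit z 1

theorem op_mul_op_one_one (hassoc : ∀ x y z : G, op (op x y) z = op x (op y z))
    (hunit : ∀ x y : G, op 1 (op x y) = op x y) (hmul : ∀ x y : G, op x y = op (x * y) 1)
    (t z : G) : op (t * op z 1) 1 = op (t * z) 1 := by
  have h := hassoc t z 1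
  rw [hmul t z, hmul z 1, hmul (op (t * z) 1), hmul t, mul_one, mul_one, op_one_op_one hunit hmul] at h
  exact h.symm

theorem op_op_one_mul_one (hassoc : ∀ x y z : G, op (op x y) z = op x (op y z))
    (hunit : ∀ x y : G, op 1 (op x y) = op x y) (hmul : ∀ x y : G, op x y = op (x * y) 1)
    (x t : G) : op (op x 1 * t) 1 = op (x * t) 1 := by
  have h := hassoc 1 x t
  rw [hmul 1 x, hmul x t, hmul 1 (op (x * t) 1), hmul (op (1 * x) 1), one_mul, one_mul,
    op_one_op_one hunit hmul] at h
  exact h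

theorem op_op_one_one_left (hassoc : ∀ x y z : G, op (op x y) z = op x (op y z))
    (hunit : ∀ x y : G, op 1 (op x y) = op x y) (hmul : ∀ x y : G, op x y = op (x * y) 1)
    (x : G) : op (op 1 1) x = op x 1 := by
  rw [hmul (op 1 1), op_op_one_mul_one hassoc hunit hmul, one_mul]

theorem op_op_one_one_right (hassoc : ∀ x y z : G, op (op x y) z = op x (op y z))
    (hunit : ∀ x y : G, op 1 (op x y) = op x y) (hmul : ∀ x y : G, op x y = op (x * y) 1)
    (x : G) : op x (op 1 1) = op x 1 := by
  rw [hmul x (op 1 1), op_mul_op_one_one hassoc hunit hmul, mul_one]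

theorem eq_op_one_one_of_op_self (hassoc : ∀ x y z : G, op (op x y) z = op x (op y z))
    (hunit : ∀ x y : G, op 1 (op x y) = op x y) (hmul : ∀ x y : G, op x y = op (x * y) 1)
    {δ : G} (hδ : op δ δ = δ) : δ = op 1 1 := by
  rw [hmul] at hδ
  have hfix : op δ 1 = δ := by rw [← hδ, op_one_op_one hunit hmul]
  calc δ = op δ 1 := hfix.symm
    _ = op (δ * δ * δ⁻¹) 1 := by rw [mul_inv_cancel_right]
    _ = op 1 1 := by rw [← op_op_one_mul_one hassoc hunit hmul, hδ, mul_inv_cancel]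

end IdenticalGroupESemigroup

theorem stmt_16_general {G : Type*} [Group G] (op : G → G → G)
    (hassoc : ∀ x y z : G, op (op x y) z = op x (op y z))
    (h2 : ∀ x y : G, op 1 (op x y) = op x y)
    (h3 : ∀ x y : G, op x y = op (x * y) 1) :
    (∀ t x y : G, op t (x * y) = op t (op x y) ∧ op (x * y) t = op (op x y) t) ∧
    (∀ x : G, op (op 1 1) x = op x (op 1 1)) ∧
    (op (op 1 1) (op 1 1) = op 1 1 ∧ ∀ δ : G, op δ δ = δ → δ = op 1 1) ∧
    (∀ x : G, ∃ y : G, op x y = op 1 1 ∧ op y x = op 1 1) ∧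
    (∀ x y : G, op (op 1 1) (op x y) = op x y) := by
  have hidem := op_one_op_one h2 h3
  have hleft := op_op_one_one_left hassoc h2 h3
  refine ⟨fun t x y => ⟨?_, ?_⟩, fun x => ?_, ⟨?_, fun δ => eq_op_one_one_of_op_self hassoc h2 h3⟩,
    fun x => ⟨x⁻¹, ?_, ?_⟩, fun x y => ?_⟩
  · rw [h3 t, h3 t, h3 x y, op_mul_op_one_one hassoc h2 h3]
  · rw [h3 _ t, h3 _ t, h3 x y, op_op_one_mul_one hassoc h2 h3]
  · rw [hleft, op_op_one_one_right hassoc h2 h3]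
  · rw [hleft, hidem]
  · rw [h3 x, mul_inv_cancel, h3 1 1, mul_one]
  · rw [h3 x⁻¹, inv_mul_cancel, h3 1 1, mul_one]
  · rw [hleft, h3 x y, hidem]

/-- Let `(G, ·)` be a group with identity `e = 1` and `⊙` an associative
operation making `(G, ·, e, ⊙)` an identical group-`e`-semigroup, i.e.
`e⊙(x·y) = e⊙(x⊙y) = x⊙y = (x·y)⊙e = (x⊙y)⊙e` for all `x, y`. Then:
(i) `(G, ·, ⊙)` is a group-joined-semigroup: `t⊙(x·y) = t⊙(x⊙y)` and
`(x·y)⊙t = (x⊙y)⊙t` for all `t, x, y`;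
(ii) `e⊙e` is central in `(G, ⊙)`;
(iii) `e⊙e` is the unique idempotent of `(G, ⊙)`;
(iv) every `x` has a `y` with `x⊙y = y⊙x = e⊙e`;
(v) `(G, ⊙, e⊙e)` is class united.
Hence `(G, ⊙)` is a unipotent class united grouplike. -/
theorem stmt_16 {G : Type*} [Group G] (op : G → G → G)
    (hassoc : ∀ x y z : G, op (op x y) z = op x (op y z))
    (h1 : ∀ x y : G, op 1 (x * y) = op 1 (op x y))
    (h2 : ∀ x y : G, op 1 (op x y) = op x y)
    (h3 : ∀ x y : G, op x y = op (x * y) 1)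
    (h4 : ∀ x y : G, op (x * y) 1 = op (op x y) 1) :
    (∀ t x y : G, op t (x * y) = op t (op x y) ∧ op (x * y) t = op (op x y) t) ∧
    (∀ x : G, op (op 1 1) x = op x (op 1 1)) ∧
    (op (op 1 1) (op 1 1) = op 1 1 ∧ ∀ δ : G, op δ δ = δ → δ = op 1 1) ∧
    (∀ x : G, ∃ y : G, op x y = op 1 1 ∧ op y x = op 1 1) ∧
    (∀ x y : G, op (op 1 1) (op x y) = op x y) :=
  stmt_16_general op hassoc h2 h3
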